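/- Let I be an instance with types satisfying the supply condition and let J ∈ A_γ(Q(I), h) for some signpost sequence γ. Then the greedy & parity correction algorithm terminates and its output E_J satisfies the type parity condition (A) and the party proportionality condition (B). In particular, the greedy & parity correction mechanism M^G is a valid apportionment mechanism over the instances satisfying the supply condition. -/

import Mathlib

open Finset

/-- A signpost sequence: `γ 0 = 0`, `γ n ∈ [n-1, n]` for `n ≥ 1`, and the
disjunction property. -/
def Signpost (γ : ℕ → ℝ) : Prop :=
  γ 0 = 0 ∧
  (∀ n : ℕ, 1 ≤ n → ((n : ℝ) - 1 ≤ γ n ∧ γ n ≤ n)) ∧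
  ((∃ k : ℕ, 2 ≤ k ∧ γ k = (k : ℝ) - 1) → ∀ l : ℕ, 1 ≤ l → γ l < l) ∧
  ((∃ k : ℕ, 1 ≤ k ∧ γ k = (k : ℝ)) → ∀ l : ℕ, 2 ≤ l → (l : ℝ) - 1 < γ l)

/-- The rounding rule `R_γ` of a signpost sequence, as a set-valued map:
`R_γ(0) = {0}`, `R_γ(t) = {n}` for `t ∈ (γ n, γ (n+1))`, and
`R_γ(t) = {n-1, n}` when `t = γ n > 0`. -/
def roundSet (γ : ℕ → ℝ) (t : ℝ) : Set ℕ :=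
  {k | (t = 0 ∧ k = 0) ∨ (γ k < t ∧ t < γ (k + 1)) ∨ (0 < t ∧ (t = γ k ∨ t = γ (k + 1)))}

/-- The divisor method solution set `A_γ(Q, h)`. -/
def divisorSet (γ : ℕ → ℝ) {n : ℕ} (Q : Fin n → ℝ) (h : ℕ) : Set (Fin n → ℕ) :=
  {S | (∑ i, S i) = h ∧ ∃ lam : ℝ, 0 < lam ∧ ∀ i, S i ∈ roundSet γ (Q i / lam)}

/-- The two candidate types. -/
inductive MType
  | f | m
deriving DecidableEq

instance : Fintype MType :=
  ⟨{MType.f, MType.m}, fun x => by cases x <;> simp⟩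

/-- The other type. -/
def MType.other : MType → MType
  | .f => .m
  | .m => .f

/-- An instance of the apportionment problem with type parity: a finite candidate
set `C`, a party map, a (nonnegative real) vote map, a type map, a house size
`h ≥ 1` and a total order (the field `ord`) refining the votes. -/
structure TypedInstance (n : ℕ) (C : Type) [Fintype C] [DecidableEq C] where
  ord : LinearOrder C
  party : C → Fin n
  votes : C → ℝ
  votes_nonneg : ∀ c, 0 ≤ votes c
  mtype : C → MType
  h : ℕ
  h_pos : 1 ≤ h
  refines : ∀ c c' : C, votes c' < votes c → ord.lt c' c

namespace TypedInstance

variable {n : ℕ} {C : Type} [Fintype C] [DecidableEq C]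

/-- The candidates of party `i`. -/
def Ci (I : TypedInstance n C) (i : Fin n) : Finset C :=
  univ.filter fun c => I.party c = i

/-- The candidates of type `t`. -/
def Ct (I : TypedInstance n C) (t : MType) : Finset C :=
  univ.filter fun c => I.mtype c = t

/-- The candidates of party `i` and type `t`. -/
def Cit (I : TypedInstance n C) (i : Fin n) (t : MType) : Finset C :=
  univ.filter fun c => I.party c = i ∧ I.mtype c = t

/-- The party vote totals `Q(I)`. -/
def Q (I : TypedInstance n C) : Fin n → ℝ := fun i => ∑ c ∈ I.Ci i, I.votes c

/-- The party × type vote totals `P(I)`. -/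
def P (I : TypedInstance n C) : Fin n → MType → ℝ := fun i t => ∑ c ∈ I.Cit i t, I.votes c

/-- The supply matrix `S(I)`. -/
def S (I : TypedInstance n C) : Fin n → MType → ℕ := fun i t => (I.Cit i t).card

/-- The supply condition: `|C_i^t| ≥ ⌈h/2⌉` for every party `i` and type `t`. -/
def SupplyCond (I : TypedInstance n C) : Prop :=
  ∀ (i : Fin n) (t : MType), (I.h + 1) / 2 ≤ (I.Cit i t).card

/-- Type parity condition (A): the numbers of elected candidates of the two types
differ by exactly `h mod 2`. Allocations are represented by the finset of elected
candidates. -/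
def CondA (I : TypedInstance n C) (E : Finset C) : Prop :=
  (((E.filter fun c => I.mtype c = MType.f).card : ℤ) -
    ((E.filter fun c => I.mtype c = MType.m).card : ℤ)).natAbs = I.h % 2

instance (I : TypedInstance n C) (E : Finset C) : Decidable (I.CondA E) := by
  unfold CondA; infer_instance

/-- The number of elected candidates of each party. -/
def partyCount (I : TypedInstance n C) (E : Finset C) : Fin n → ℕ :=
  fun i => (E.filter fun c => I.party c = i).card

/-- The number of elected candidates of each type. -/
def typeCount (I : TypedInstance n C) (E : Finset C) : MType → ℕ :=
  fun t => (E.filter fun c => I.mtype c = t).card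

/-- Party proportionality condition (B) w.r.t. a signpost sequence `γ`. -/
def CondB (I : TypedInstance n C) (γ : ℕ → ℝ) (E : Finset C) : Prop :=
  ∃ J ∈ divisorSet γ I.Q I.h, ∀ i, I.partyCount E i = J i

/-- The set `X(I, γ)` of feasible allocations. -/
def X (I : TypedInstance n C) (γ : ℕ → ℝ) : Set (Finset C) :=
  {E | I.CondA E ∧ I.CondB γ E}

/-- The polytope `Z(I, J, γ)` of fractional allocations. -/
def Z (I : TypedInstance n C) (J : Fin n → ℕ) : Set (Fin n → MType → ℝ) :=
  {y | (∀ t : MType, ((I.h / 2 : ℕ) : ℝ) ≤ ∑ i, y i t) ∧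
       (∀ i : Fin n, y i MType.f + y i MType.m = (J i : ℝ)) ∧
       (∀ (i : Fin n) (t : MType), 0 ≤ y i t ∧ y i t ≤ ((I.Cit i t).card : ℝ))}

/-- The scaled instance `αI` (same candidate order). -/
def scale (I : TypedInstance n C) (α : ℝ) (hα : 0 < α) : TypedInstance n C where
  ord := I.ord
  party := I.party
  votes := fun c => α * I.votes c
  votes_nonneg := fun c => mul_nonneg hα.le (I.votes_nonneg c)
  mtype := I.mtype
  h := I.h
  h_pos := I.h_pos
  refines := fun c c' hlt => I.refines c c' (lt_of_mul_lt_mul_left hlt hα.le)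

/-- `G` is a voting increment of `I` in candidate `c`: identical to `I` except
that `c` garners strictly more votes. -/
def VotingIncrement (I G : TypedInstance n C) (c : C) : Prop :=
  G.party = I.party ∧ G.mtype = I.mtype ∧ G.h = I.h ∧
  I.votes c < G.votes c ∧ ∀ c' : C, c' ≠ c → G.votes c' = I.votes c'

/-- The rank of a candidate in the order `≻`: position `1` is the top candidate. -/
def rank (I : TypedInstance n C) (c : C) : ℕ :=
  letI := I.ord
  (univ.filter fun c' => c ≤ c').card

/-- The top `k` candidates of a subset `D` according to the order of `I`. -/
def topOf (I : TypedInstance n C) (D : Finset C) (k : ℕ) : Finset C :=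
  letI := I.ord
  D.filter fun c => (D.filter fun c' => c ≤ c').card ≤ k

/-- The type-oblivious solution `T_J`: in every party `i`, the top `J i`
candidates of `C_i` are elected. -/
def oblivious (I : TypedInstance n C) (J : Fin n → ℕ) : Finset C :=
  univ.filter fun c => c ∈ I.topOf (I.Ci (I.party c)) (J (I.party c))

/-- The over-represented type of an allocation (type `f` in case of a tie). -/
def overType (I : TypedInstance n C) (E : Finset C) : MType :=
  if I.typeCount E MType.m ≤ I.typeCount E MType.f then MType.f else MType.m

/-- One parity-correction swap: the worst-ranked elected candidate of the
over-represented type is replaced by the best-ranked unelected candidate of the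
same party and of the under-represented type (if any; otherwise nothing happens). -/
def swapStep (I : TypedInstance n C) (E : Finset C) : Finset C :=
  letI := I.ord
  let t := I.overType E
  let elected := E.filter fun c => I.mtype c = t
  if hE : elected.Nonempty then
    let s := elected.min' hE
    let pool := univ.filter fun c => c ∉ E ∧ I.party c = I.party s ∧ I.mtype c = t.other
    if hp : pool.Nonempty then insert (pool.max' hp) (E.erase s) else E
  else E

/-- The parity-correction loop (with fuel). -/
def greedyAux (I : TypedInstance n C) : ℕ → Finset C → Finset C
  | 0, E => E
  | k + 1, E => if I.CondA E then E else greedyAux I k (I.swapStep E)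

/-- The output `E_J` of the greedy & parity correction algorithm. -/
def greedy (I : TypedInstance n C) (J : Fin n → ℕ) : Finset C :=
  greedyAux I I.h (I.oblivious J)

/-- The greedy & parity correction mechanism `M^G`. -/
def MG (I : TypedInstance n C) (γ : ℕ → ℝ) : Set (Finset C) :=
  {E | ∃ J ∈ divisorSet γ I.Q I.h, E = I.greedy J}

/-- Two allocations agree on all candidates of rank at most `l`. -/
def agreeUpTo (I : TypedInstance n C) (E₁ E₂ : Finset C) (l : ℕ) : Prop :=
  ∀ c : C, I.rank c ≤ l → (c ∈ E₁ ↔ c ∈ E₂)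

instance (I : TypedInstance n C) (E₁ E₂ : Finset C) (l : ℕ) :
    Decidable (I.agreeUpTo E₁ E₂ l) := by
  unfold agreeUpTo; infer_instance

/-- The length of the common prefix of two allocations (w.r.t. the ranking). -/
def prefixLen (I : TypedInstance n C) (E₁ E₂ : Finset C) : ℕ :=
  ((Finset.range (Fintype.card C + 1)).filter fun l => I.agreeUpTo E₁ E₂ l).sup id

/-- The vote-leading type (type `f` in case of a tie; this tie-breaking rule is
scaling invariant). -/
noncomputable def voteLeading (I : TypedInstance n C) : MType :=
  if (∑ c ∈ I.Ct MType.f, I.votes c) < (∑ c ∈ I.Ct MType.m, I.votes c) then MType.m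
  else MType.f

/-- The parity marginal `φ(I)`: for even `h` both types get `h/2`; for odd `h` the
vote-leading type gets `⌈h/2⌉`. -/
noncomputable def parityMarginal (I : TypedInstance n C) : MType → ℕ :=
  fun t => if t = I.voteLeading then (I.h + 1) / 2 else I.h / 2

end TypedInstance

/-- `(x, lam, mu)` is a `δ`-biproportional solution of the two-dimensional
instance with supply `(P, S, J, φ)`. -/
def IsBipropSol (δ : ℕ → ℝ) {n : ℕ} (P : Fin n → MType → ℝ) (S : Fin n → MType → ℕ)
    (J : Fin n → ℕ) (φ : MType → ℕ) (x : Fin n → MType → ℕ)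
    (lam : Fin n → ℝ) (mu : MType → ℝ) : Prop :=
  (∀ i, 0 < lam i) ∧ (∀ t, 0 < mu t) ∧
  (∀ (i : Fin n) (t : MType), x i t < S i t → x i t ∈ roundSet δ (P i t * lam i * mu t)) ∧
  (∀ i : Fin n, x i MType.f + x i MType.m = J i) ∧
  (∀ t : MType, (∑ i, x i t) = φ t) ∧
  (∀ (i : Fin n) (t : MType), x i t ≤ S i t)

/-- The set `B_δ(P, S, J, φ)` of `δ`-biproportional solutions. -/
def bipropSet (δ : ℕ → ℝ) {n : ℕ} (P : Fin n → MType → ℝ) (S : Fin n → MType → ℕ)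
    (J : Fin n → ℕ) (φ : MType → ℕ) : Set (Fin n → MType → ℕ) :=
  {x | ∃ lam mu, IsBipropSol δ P S J φ x lam mu}

/-- `δ`-biproportional solutions of a two-dimensional instance `(P, J, φ)`
without supply bounds. -/
def IsBipropSolNS (δ : ℕ → ℝ) {n : ℕ} (P : Fin n → MType → ℝ)
    (J : Fin n → ℕ) (φ : MType → ℕ) (x : Fin n → MType → ℕ)
    (lam : Fin n → ℝ) (mu : MType → ℝ) : Prop :=
  (∀ i, 0 < lam i) ∧ (∀ t, 0 < mu t) ∧
  (∀ (i : Fin n) (t : MType), x i t ∈ roundSet δ (P i t * lam i * mu t)) ∧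
  (∀ i : Fin n, x i MType.f + x i MType.m = J i) ∧
  (∀ t : MType, (∑ i, x i t) = φ t)

/-- The set `B_δ(P, J, φ)` for instances without supply bounds. -/
def bipropSetNS (δ : ℕ → ℝ) {n : ℕ} (P : Fin n → MType → ℝ)
    (J : Fin n → ℕ) (φ : MType → ℕ) : Set (Fin n → MType → ℕ) :=
  {x | ∃ lam mu, IsBipropSolNS δ P J φ x lam mu}

/-- `F` is a fair share (matrix scaling) of the two-dimensional instance
`(P, J, φ)`. -/
def IsFairShare {n : ℕ} (P : Fin n → MType → ℝ) (J : Fin n → ℕ) (φ : MType → ℕ)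
    (F : Fin n → MType → ℝ) : Prop :=
  ∃ (lam : Fin n → ℝ) (mu : MType → ℝ),
    (∀ i, 0 < lam i) ∧ (∀ t, 0 < mu t) ∧ (∀ i t, 0 < F i t) ∧
    (∀ (i : Fin n) (t : MType), F i t = P i t * lam i * mu t) ∧
    (∀ i : Fin n, F i MType.f + F i MType.m = (J i : ℝ)) ∧
    (∀ t : MType, (∑ i, F i t) = (φ t : ℝ))

namespace TypedInstance

variable {n : ℕ} {C : Type} [Fintype C] [DecidableEq C]

/-- The allocation `E_x` electing, for every party `i` and type `t`, the top
`x i t` candidates of `C_i^t`. -/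
def allocOf (I : TypedInstance n C) (x : Fin n → MType → ℕ) : Finset C :=
  univ.filter fun c =>
    c ∈ I.topOf (I.Cit (I.party c) (I.mtype c)) (x (I.party c) (I.mtype c))

/-- The `δ`-biproportional parity mechanism `M^B_δ`. -/
def MB (I : TypedInstance n C) (δ γ : ℕ → ℝ) : Set (Finset C) :=
  {E | ∃ J ∈ divisorSet γ I.Q I.h,
        ∃ x ∈ bipropSet δ I.P I.S J I.parityMarginal, E = I.allocOf x}

end TypedInstance

/-! Each parity-correction swap keeps the party counts and lowers the type imbalance by two.
The supply condition guarantees that a swap is always possible: the under-represented type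
has fewer than `⌈h/2⌉` elected members in total, so every party still has an unelected
candidate of that type. As the imbalance of `T_J` is at most `h`, the `h` rounds of the loop
suffice to reach imbalance `h mod 2`, which is condition (A). -/

namespace Finset

variable {α : Type*}

theorem card_filter_card_filter_le_le [LinearOrder α] (D : Finset α) {k : ℕ}
    (hk : k ≤ #D) : #{c ∈ D | #{c' ∈ D | c ≤ c'} ≤ k} = k := by
  set r : α → ℕ := fun c => #{c' ∈ D | c ≤ c'}
  have hanti : StrictAntiOn r D := by
    intro a ha b _ hab
    refine card_lt_card ((ssubset_iff_of_subset ?_).mpr ⟨a, ?_, ?_⟩)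
    · intro c hc
      exact mem_filter.mpr ⟨(mem_filter.mp hc).1, hab.le.trans (mem_filter.mp hc).2⟩
    · exact mem_filter.mpr ⟨ha, le_rfl⟩
    · exact fun h => (mem_filter.mp h).2.not_gt hab
  have himage : D.image r = Icc 1 #D := by
    refine eq_of_subset_of_card_le (fun v hv => ?_) ?_
    · obtain ⟨c, hc, rfl⟩ := mem_image.mp hv
      exact mem_Icc.mpr ⟨card_pos.mpr ⟨c, mem_filter.mpr ⟨hc, le_rfl⟩⟩,
        card_le_card (filter_subset _ _)⟩
    · rw [card_image_of_injOn hanti.injOn, Nat.card_Icc, Nat.add_sub_cancel]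
  calc #{c ∈ D | r c ≤ k}
      = #((D.filter (r · ≤ k)).image r) :=
        (card_image_of_injOn (hanti.injOn.mono (filter_subset _ _))).symm
    _ = #{v ∈ Icc 1 #D | v ≤ k} := by rw [← himage, filter_image]
    _ = #(Icc 1 k) := by
        congr 1; ext v; simp only [mem_filter, mem_Icc]; omega
    _ = k := by simp

theorem card_filter_insert_erase_add [DecidableEq α] {E : Finset α} {s b : α}
    (hs : s ∈ E) (hb : b ∉ E) (p : α → Prop) [DecidablePred p] :
    #{c ∈ insert b (E.erase s) | p c} + (if p s then 1 else 0)
      = #{c ∈ E | p c} + (if p b then 1 else 0) := by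
  have hb' : b ∉ (E.filter p).erase s := fun h => hb (mem_filter.mp (mem_of_mem_erase h)).1
  rw [filter_insert, filter_erase]
  split_ifs with hpb hps hps
  · rw [card_insert_of_notMem hb', card_erase_add_one (mem_filter.mpr ⟨hs, hps⟩)]
  · rw [card_insert_of_notMem hb', erase_eq_of_notMem fun h => hps (mem_filter.mp h).2]
  · rw [add_zero, card_erase_add_one (mem_filter.mpr ⟨hs, hps⟩)]
  · rw [erase_eq_of_notMem fun h => hps (mem_filter.mp h).2]

end Finset

namespace TypedInstance

variable {n : ℕ} {C : Type} [Fintype C] [DecidableEq C] (I : TypedInstance n C)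

def imbalance (E : Finset C) : ℕ :=
  ((I.typeCount E MType.f : ℤ) - I.typeCount E MType.m).natAbs

theorem condA_iff_imbalance (E : Finset C) : I.CondA E ↔ I.imbalance E = I.h % 2 :=
  Iff.rfl

theorem card_filter_mtype_f_add_card_filter_mtype_m (D : Finset C) :
    #{c ∈ D | I.mtype c = MType.f} + #{c ∈ D | I.mtype c = MType.m} = #D := by
  have hm : ∀ c, I.mtype c = MType.m ↔ ¬I.mtype c = MType.f := by
    intro c; cases I.mtype c <;> simp
  simp only [hm]
  exact card_filter_add_card_filter_not _

theorem typeCount_f_add_typeCount_m (E : Finset C) :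
    I.typeCount E MType.f + I.typeCount E MType.m = #E :=
  I.card_filter_mtype_f_add_card_filter_mtype_m E

theorem sum_partyCount (E : Finset C) : ∑ i, I.partyCount E i = #E :=
  (card_eq_sum_card_fiberwise fun c _ => mem_univ (I.party c)).symm

theorem card_eq_sum_of_partyCount {E : Finset C} {J : Fin n → ℕ}
    (hJ : ∀ i, I.partyCount E i = J i) : #E = ∑ i, J i := by
  rw [← sum_partyCount]
  exact sum_congr rfl fun i _ => hJ i

theorem card_Cit_f_add_card_Cit_m (i : Fin n) :
    #(I.Cit i MType.f) + #(I.Cit i MType.m) = #(I.Ci i) := by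
  have hCit : ∀ t, I.Cit i t = {c ∈ I.Ci i | I.mtype c = t} := by
    intro t; ext c; simp [Cit, Ci]
  rw [hCit, hCit, I.card_filter_mtype_f_add_card_filter_mtype_m]

theorem h_le_card_Ci (hsup : I.SupplyCond) (i : Fin n) : I.h ≤ #(I.Ci i) := by
  have := hsup i MType.f
  have := hsup i MType.m
  have := I.card_Cit_f_add_card_Cit_m i
  omega

theorem card_topOf (D : Finset C) {k : ℕ} (hk : k ≤ #D) : #(I.topOf D k) = k := by
  let := I.ord
  exact card_filter_card_filter_le_le D hk

theorem partyCount_oblivious (J : Fin n → ℕ) (i : Fin n) (hJ : J i ≤ #(I.Ci i)) :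
    I.partyCount (I.oblivious J) i = J i := by
  have hparty : {c ∈ I.oblivious J | I.party c = i} = I.topOf (I.Ci i) (J i) := by
    ext c
    simp only [oblivious, mem_filter, mem_univ, true_and]
    constructor
    · rintro ⟨hc, rfl⟩; exact hc
    · intro hc
      have hci : I.party c = i := by
        let := I.ord
        simpa [Ci] using (mem_filter.mp hc).1
      exact ⟨hci ▸ hc, hci⟩
  rw [partyCount, hparty, I.card_topOf _ hJ]

theorem partyCount_insert_erase {E : Finset C} {s b : C} (hs : s ∈ E) (hb : b ∉ E)
    (hparty : I.party b = I.party s) (i : Fin n) :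
    I.partyCount (insert b (E.erase s)) i = I.partyCount E i := by
  have h := card_filter_insert_erase_add hs hb (I.party · = i)
  simp only [hparty] at h
  exact Nat.add_right_cancel h

theorem typeCount_insert_erase_add {E : Finset C} {s b : C} (hs : s ∈ E) (hb : b ∉ E)
    (t : MType) :
    I.typeCount (insert b (E.erase s)) t + (if I.mtype s = t then 1 else 0)
      = I.typeCount E t + (if I.mtype b = t then 1 else 0) :=
  card_filter_insert_erase_add hs hb (I.mtype · = t)

theorem imbalance_insert_erase {E : Finset C} {s b : C} (hs : s ∈ E) (hb : b ∉ E)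
    {t : MType} (hs_t : I.mtype s = t) (hb_t : I.mtype b = t.other)
    (hover : I.typeCount E t.other + 2 ≤ I.typeCount E t) :
    I.imbalance (insert b (E.erase s)) + 2 = I.imbalance E := by
  have hf := I.typeCount_insert_erase_add hs hb MType.f
  have hm := I.typeCount_insert_erase_add hs hb MType.m
  unfold imbalance
  cases t <;> simp only [MType.other] at hb_t hover <;>
    simp only [hs_t, hb_t, if_pos, if_neg, reduceCtorEq, not_false_eq_true] at hf hm <;>
    omega

theorem typeCount_other_overType_add_two_le {E : Finset C} (hcard : #E = I.h)
    (hA : ¬I.CondA E) :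
    I.typeCount E (I.overType E).other + 2 ≤ I.typeCount E (I.overType E) := by
  have hsum := I.typeCount_f_add_typeCount_m E
  rw [condA_iff_imbalance, imbalance] at hA
  unfold overType
  split_ifs <;> simp only [MType.other] <;> omega

theorem unelected_nonempty (hsup : I.SupplyCond) {E : Finset C} {t : MType}
    (ht : 2 * I.typeCount E t + 2 ≤ I.h) (i : Fin n) :
    ({c | c ∉ E ∧ I.party c = i ∧ I.mtype c = t} : Finset C).Nonempty := by
  by_contra hempty
  have hsub : I.Cit i t ⊆ {c ∈ E | I.mtype c = t} := by
    intro c hc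
    obtain ⟨hci, hct⟩ := (mem_filter.mp hc).2
    by_contra hcE
    refine hempty ⟨c, mem_filter.mpr ⟨mem_univ c, ?_, hci, hct⟩⟩
    exact fun h => hcE (mem_filter.mpr ⟨h, hct⟩)
  have := card_le_card hsub
  have := hsup i t
  unfold typeCount at ht
  omega

theorem exists_swapStep_eq (hsup : I.SupplyCond) {E : Finset C} (hcard : #E = I.h)
    (hA : ¬I.CondA E) :
    ∃ s ∈ E, ∃ b ∉ E, I.party b = I.party s ∧ I.mtype s = I.overType E ∧
      I.mtype b = (I.overType E).other ∧ I.swapStep E = insert b (E.erase s) := by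
  have hover := I.typeCount_other_overType_add_two_le hcard hA
  have hunder : 2 * I.typeCount E (I.overType E).other + 2 ≤ I.h := by
    have := I.typeCount_f_add_typeCount_m E
    generalize I.overType E = t at hover ⊢
    cases t <;> simp only [MType.other] at hover ⊢ <;> omega
  dsimp only [swapStep]
  let := I.ord
  split_ifs with hE hpool
  · obtain ⟨hsE, hst⟩ := mem_filter.mp (min'_mem _ hE)
    obtain ⟨hbE, hbs, hbt⟩ := (mem_filter.mp (max'_mem _ hpool)).2
    exact ⟨_, hsE, _, hbE, hbs, hst, hbt, rfl⟩
  · exact absurd (I.unelected_nonempty hsup hunder _) hpool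
  · exact absurd (card_pos.mp (by unfold typeCount at hover; omega)) hE

theorem swapStep_spec (hsup : I.SupplyCond) {E : Finset C} (hcard : #E = I.h)
    (hA : ¬I.CondA E) :
    (∀ i, I.partyCount (I.swapStep E) i = I.partyCount E i) ∧
      I.imbalance (I.swapStep E) + 2 = I.imbalance E := by
  obtain ⟨s, hs, b, hb, hparty, hst, hbt, hswap⟩ := I.exists_swapStep_eq hsup hcard hA
  rw [hswap]
  exact ⟨I.partyCount_insert_erase hs hb hparty,
    I.imbalance_insert_erase hs hb hst hbt (I.typeCount_other_overType_add_two_le hcard hA)⟩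

theorem greedyAux_spec (hsup : I.SupplyCond) (k : ℕ) {E : Finset C} (hcard : #E = I.h)
    (himb : I.imbalance E ≤ I.h % 2 + 2 * k) :
    I.CondA (I.greedyAux k E) ∧ ∀ i, I.partyCount (I.greedyAux k E) i = I.partyCount E i := by
  induction k generalizing E with
  | zero =>
    have := I.typeCount_f_add_typeCount_m E
    refine ⟨?_, fun _ => rfl⟩
    rw [greedyAux, condA_iff_imbalance]
    unfold imbalance at himb ⊢
    omega
  | succ k ih =>
    rw [greedyAux]
    split_ifs with hA
    · exact ⟨hA, fun _ => rfl⟩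
    · obtain ⟨hparty, himb'⟩ := I.swapStep_spec hsup hcard hA
      have hcard' := (I.card_eq_sum_of_partyCount hparty).trans ((I.sum_partyCount E).trans hcard)
      obtain ⟨hA', hparty'⟩ := ih hcard' (by omega)
      exact ⟨hA', fun i => (hparty' i).trans (hparty i)⟩

theorem greedy_spec (hsup : I.SupplyCond) {J : Fin n → ℕ} (hJ : ∑ i, J i = I.h) :
    I.CondA (I.greedy J) ∧ ∀ i, I.partyCount (I.greedy J) i = J i := by
  have hJ_le : ∀ i, J i ≤ I.h := fun i =>
    hJ ▸ single_le_sum (fun _ _ => Nat.zero_le _) (mem_univ i)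
  have hob : ∀ i, I.partyCount (I.oblivious J) i = J i := fun i =>
    I.partyCount_oblivious J i ((hJ_le i).trans (I.h_le_card_Ci hsup i))
  have hcard : #(I.oblivious J) = I.h := (I.card_eq_sum_of_partyCount hob).trans hJ
  have himb : I.imbalance (I.oblivious J) ≤ I.h % 2 + 2 * I.h := by
    have := I.typeCount_f_add_typeCount_m (I.oblivious J)
    unfold imbalance
    omega
  obtain ⟨hA, hparty⟩ := I.greedyAux_spec hsup I.h hcard himb
  exact ⟨hA, fun i => (hparty i).trans (hob i)⟩

theorem greedy_mem_X (hsup : I.SupplyCond) {γ : ℕ → ℝ} {J : Fin n → ℕ}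
    (hJ : J ∈ divisorSet γ I.Q I.h) : I.greedy J ∈ I.X γ :=
  let ⟨hA, hparty⟩ := I.greedy_spec hsup hJ.1
  ⟨hA, J, hJ, hparty⟩

end TypedInstance

theorem stmt6_general {n : ℕ} {C : Type} [Fintype C] [DecidableEq C]
    (γ : ℕ → ℝ)
    (I : TypedInstance n C) (hsup : I.SupplyCond)
    (J : Fin n → ℕ) (hJ : J ∈ divisorSet γ I.Q I.h) :
    (I.CondA (I.greedy J) ∧ I.CondB γ (I.greedy J)) ∧
    (I.MG γ ⊆ I.X γ) ∧ ((I.X γ).Nonempty → (I.MG γ).Nonempty) := by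
  refine ⟨I.greedy_mem_X hsup hJ, ?_, ?_⟩
  · rintro _ ⟨J', hJ', rfl⟩
    exact I.greedy_mem_X hsup hJ'
  · rintro ⟨E, -, J', hJ', -⟩
    exact ⟨I.greedy J', J', hJ', rfl⟩

/-- the greedy & parity correction algorithm outputs a solution
satisfying (A) and (B); in particular `M^G` is a valid apportionment mechanism
over the instances satisfying the supply condition. -/
theorem stmt6 {n : ℕ} {C : Type} [Fintype C] [DecidableEq C]
    (γ : ℕ → ℝ) (hγ : Signpost γ)
    (I : TypedInstance n C) (hsup : I.SupplyCond)
    (J : Fin n → ℕ) (hJ : J ∈ divisorSet γ I.Q I.h) :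
    (I.CondA (I.greedy J) ∧ I.CondB γ (I.greedy J)) ∧
    (I.MG γ ⊆ I.X γ) ∧ ((I.X γ).Nonempty → (I.MG γ).Nonempty) :=
  stmt6_general γ I hsup J hJ
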